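/- Let α ∈ (0,1], x = (√(1+4α²) − 1)/2, θ = (1/2)·arccos(1/2 + 1/(1+√(1+4α²))), r > 0. Let p ∈ R³, let u be a fixed unit vector, and let T be the spherical block T = {q ∈ R³ : r ≤ |q − p| ≤ r(1+x) and the angle between q − p and u is at most θ}. Then for any q₁, q₂ ∈ T, |q₁ − q₂| ≤ α·r(1+x). -/

import Mathlib

open Real InnerProductGeometry

private lemma stmt9_corner (x r s₁ s₂ : ℝ) (hx0 : 0 ≤ x)
    (h1l : r ≤ s₁) (h1r : s₁ ≤ r * (1 + x)) (h2l : r ≤ s₂) (h2r : s₂ ≤ r * (1 + x)) :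
    (1 + x) * (s₁ ^ 2 + s₂ ^ 2) - (x + 2) * (s₁ * s₂) ≤ x * (1 + x) ^ 2 * r ^ 2 := by
  nlinarith [mul_nonneg (sub_nonneg.2 h1l) (sub_nonneg.2 h1r),
    mul_nonneg (sub_nonneg.2 h2l) (sub_nonneg.2 h2r),
    mul_nonneg (sub_nonneg.2 h1l) (sub_nonneg.2 h2l),
    mul_nonneg (sub_nonneg.2 h1r) (sub_nonneg.2 h2r),
    sq_nonneg (s₁ - s₂),
    mul_nonneg hx0 (mul_nonneg (sub_nonneg.2 h1l) (sub_nonneg.2 h1r)),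
    mul_nonneg hx0 (mul_nonneg (sub_nonneg.2 h2l) (sub_nonneg.2 h2r))]

private lemma stmt9_mono (x r : ℝ) (hx0 : 0 ≤ x) (hr : 0 < r) :
    x * (1 + x) * r ^ 2 ≤ x * (1 + x) ^ 3 * r ^ 2 := by
  nlinarith [mul_nonneg (mul_nonneg hx0 (sq_nonneg r)) hx0,
    mul_nonneg (mul_nonneg (mul_nonneg hx0 (sq_nonneg r)) hx0) hx0,
    mul_nonneg (mul_nonneg (mul_nonneg (mul_nonneg hx0 (sq_nonneg r)) hx0) hx0) hx0]

set_option maxHeartbeats 1000000 in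
open scoped RealInnerProductSpace in
private lemma stmt9_inner_lb (u v : EuclideanSpace ℝ (Fin 3)) (hu : ‖u‖ = 1)
    (hv : 0 < ‖v‖) (w : EuclideanSpace ℝ (Fin 3)) (hw : 0 < ‖w‖) :
    ‖v‖ * ‖w‖ * Real.cos (angle v u + angle w u) ≤ ⟪v, w⟫ := by
  set a := ⟪v, u⟫ with ha
  set b := ⟪w, u⟫ with hb
  have hca : Real.cos (angle v u) = a / ‖v‖ := by
    rw [cos_angle, hu, mul_one]
  have hcb : Real.cos (angle w u) = b / ‖w‖ := by
    rw [cos_angle, hu, mul_one]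
  have hae : a = ‖v‖ * Real.cos (angle v u) := by
    rw [hca]; field_simp
  have hbe : b = ‖w‖ * Real.cos (angle w u) := by
    rw [hcb]; field_simp
  have huu : ⟪u, u⟫ = (1:ℝ) := by
    rw [real_inner_self_eq_norm_sq, hu]; norm_num
  have huv : ⟪u, v⟫ = a := by rw [real_inner_comm]
  have huw : ⟪u, w⟫ = b := by rw [real_inner_comm]
  have hinner : ⟪v - a • u, w - b • u⟫ = ⟪v, w⟫ - a * b := by
    simp only [inner_sub_left, inner_sub_right, real_inner_smul_left,
      real_inner_smul_right, huu, huw, huv, ← ha, ← hb]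
    ring
  have hnv : ‖v - a • u‖ = ‖v‖ * Real.sin (angle v u) := by
    have h1 : ‖v - a • u‖ ^ 2 = (‖v‖ * Real.sin (angle v u)) ^ 2 := by
      rw [norm_sub_sq_real, real_inner_smul_right, norm_smul, hu, mul_one,
        Real.norm_eq_abs, sq_abs, ← ha, hae]
      linear_combination (-(‖v‖ ^ 2)) * Real.sin_sq (angle v u)
    have h2 : 0 ≤ Real.sin (angle v u) :=
      Real.sin_nonneg_of_nonneg_of_le_pi (angle_nonneg _ _) (angle_le_pi _ _)
    nlinarith [norm_nonneg (v - a • u), mul_nonneg hv.le h2, h1]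
  have hnw : ‖w - b • u‖ = ‖w‖ * Real.sin (angle w u) := by
    have h1 : ‖w - b • u‖ ^ 2 = (‖w‖ * Real.sin (angle w u)) ^ 2 := by
      rw [norm_sub_sq_real, real_inner_smul_right, norm_smul, hu, mul_one,
        Real.norm_eq_abs, sq_abs, ← hb, hbe]
      linear_combination (-(‖w‖ ^ 2)) * Real.sin_sq (angle w u)
    have h2 : 0 ≤ Real.sin (angle w u) :=
      Real.sin_nonneg_of_nonneg_of_le_pi (angle_nonneg _ _) (angle_le_pi _ _)
    nlinarith [norm_nonneg (w - b • u), mul_nonneg hw.le h2, h1]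
  have hcs : -(‖v - a • u‖ * ‖w - b • u‖) ≤ ⟪v - a • u, w - b • u⟫ :=
    neg_le_of_abs_le (abs_real_inner_le_norm _ _)
  rw [hinner, hnv, hnw, hae, hbe] at hcs
  rw [Real.cos_add]
  linarith [hcs]

set_option maxHeartbeats 1000000 in
/-- Any two points of the spherical block
`T = {q : r ≤ |q − p| ≤ r(1+x), angle(q − p, u) ≤ θ}` in `ℝ³` are at Euclidean distance at
most `α·r·(1+x)`. -/
theorem stmt9 (α x θ r : ℝ) (hα0 : 0 < α) (hα1 : α ≤ 1)
    (hx : x = (Real.sqrt (1 + 4 * α ^ 2) - 1) / 2)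
    (hθ : θ = (1 / 2) * Real.arccos (1 / 2 + 1 / (1 + Real.sqrt (1 + 4 * α ^ 2))))
    (hr : 0 < r)
    (p u : EuclideanSpace ℝ (Fin 3)) (hu : ‖u‖ = 1)
    (q₁ q₂ : EuclideanSpace ℝ (Fin 3))
    (h₁ : r ≤ dist p q₁ ∧ dist p q₁ ≤ r * (1 + x) ∧
      InnerProductGeometry.angle (q₁ - p) u ≤ θ)
    (h₂ : r ≤ dist p q₂ ∧ dist p q₂ ≤ r * (1 + x) ∧
      InnerProductGeometry.angle (q₂ - p) u ≤ θ) :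
    dist q₁ q₂ ≤ α * r * (1 + x) := by
  obtain ⟨h1l, h1r, h1a⟩ := h₁
  obtain ⟨h2l, h2r, h2a⟩ := h₂
  -- basic facts about x and the sqrt
  have hsq : Real.sqrt (1 + 4 * α ^ 2) = 1 + 2 * x := by rw [hx]; ring
  have hssq : (1 + 2 * x) ^ 2 = 1 + 4 * α ^ 2 := by
    rw [← hsq]; exact Real.sq_sqrt (by positivity)
  have hx0 : 0 ≤ x := by
    have h1 : Real.sqrt 1 ≤ Real.sqrt (1 + 4 * α ^ 2) :=
      Real.sqrt_le_sqrt (by nlinarith)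
    rw [Real.sqrt_one, hsq] at h1; linarith
  have hα2 : α ^ 2 = x * (1 + x) := by nlinarith
  have ht0 : (0:ℝ) < 1 + x := by linarith
  -- the constant c₀ = cos (2θ)
  set c₀ : ℝ := 1 / 2 + 1 / (1 + Real.sqrt (1 + 4 * α ^ 2)) with hc₀
  have hc₀e : c₀ = 1 / 2 + 1 / (2 * (1 + x)) := by rw [hc₀, hsq]; ring_nf
  have hc₀1 : c₀ ≤ 1 := by
    rw [hc₀e]
    have : 1 / (2 * (1 + x)) ≤ 1 / 2 := by
      apply one_div_le_one_div_of_le <;> linarith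
    linarith
  have hc₀m1 : -1 ≤ c₀ := by
    rw [hc₀e]
    have : 0 < 1 / (2 * (1 + x)) := by positivity
    linarith
  have h2θ : 2 * θ = Real.arccos c₀ := by rw [hθ]; ring
  have hcos2θ : Real.cos (2 * θ) = c₀ := by rw [h2θ, Real.cos_arccos hc₀m1 hc₀1]
  have h2θpi : 2 * θ ≤ π := by rw [h2θ]; exact Real.arccos_le_pi _
  -- vectors
  set v₁ := q₁ - p with hv₁
  set v₂ := q₂ - p with hv₂
  have hd1 : dist p q₁ = ‖v₁‖ := by rw [dist_eq_norm', hv₁]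
  have hd2 : dist p q₂ = ‖v₂‖ := by rw [dist_eq_norm', hv₂]
  rw [hd1] at h1l h1r
  rw [hd2] at h2l h2r
  have hn1 : 0 < ‖v₁‖ := lt_of_lt_of_le hr h1l
  have hn2 : 0 < ‖v₂‖ := lt_of_lt_of_le hr h2l
  -- inner product lower bound
  have hib := stmt9_inner_lb u v₁ hu hn1 v₂ hn2
  have hsum0 : 0 ≤ angle v₁ u + angle v₂ u := by
    have := angle_nonneg v₁ u; have := angle_nonneg v₂ u; linarith
  have hsumle : angle v₁ u + angle v₂ u ≤ 2 * θ := by linarith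
  have hcosmono : c₀ ≤ Real.cos (angle v₁ u + angle v₂ u) := by
    rw [← hcos2θ]
    exact Real.cos_le_cos_of_nonneg_of_le_pi hsum0 h2θpi hsumle
  have hib2 : ‖v₁‖ * ‖v₂‖ * c₀ ≤ (inner ℝ v₁ v₂ : ℝ) := by
    calc ‖v₁‖ * ‖v₂‖ * c₀ ≤ ‖v₁‖ * ‖v₂‖ * Real.cos (angle v₁ u + angle v₂ u) := by
          apply mul_le_mul_of_nonneg_left hcosmono (by positivity)
      _ ≤ (inner ℝ v₁ v₂ : ℝ) := hib
  -- norm of difference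
  have hdq : dist q₁ q₂ = ‖v₁ - v₂‖ := by
    rw [dist_eq_norm, hv₁, hv₂]; congr 1; abel
  have hnd : ‖v₁ - v₂‖ ^ 2 = ‖v₁‖ ^ 2 - 2 * (inner ℝ v₁ v₂ : ℝ) + ‖v₂‖ ^ 2 :=
    norm_sub_sq_real v₁ v₂
  have hc₀mul : 2 * c₀ * (1 + x) = x + 2 := by
    rw [hc₀e]; field_simp; ring
  set s₁ := ‖v₁‖ with hs₁
  set s₂ := ‖v₂‖ with hs₂
  have hcorner := stmt9_corner x r s₁ s₂ hx0 h1l h1r h2l h2r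
  have hI : (x + 2) * (s₁ * s₂) ≤ 2 * (1 + x) * (inner ℝ v₁ v₂ : ℝ) := by
    have h := mul_le_mul_of_nonneg_left hib2 (by linarith : (0:ℝ) ≤ 2 * (1 + x))
    calc (x + 2) * (s₁ * s₂) = 2 * c₀ * (1 + x) * (s₁ * s₂) := by rw [hc₀mul]
      _ = 2 * (1 + x) * (s₁ * s₂ * c₀) := by ring
      _ ≤ 2 * (1 + x) * (inner ℝ v₁ v₂ : ℝ) := by
          rw [show s₁ * s₂ * c₀ = s₁ * s₂ * c₀ from rfl]; exact h
  have h1 : (1 + x) * ‖v₁ - v₂‖ ^ 2 ≤ x * (1 + x) ^ 2 * r ^ 2 := by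
    rw [hnd]; nlinarith [hI, hcorner]
  -- divide by (1+x)
  have hA : ‖v₁ - v₂‖ ^ 2 ≤ x * (1 + x) * r ^ 2 := by
    have h2 := (le_div_iff₀' ht0).mpr h1
    have h3 : x * (1 + x) ^ 2 * r ^ 2 / (1 + x) = x * (1 + x) * r ^ 2 := by
      field_simp
    rwa [h3] at h2
  have hfin : ‖v₁ - v₂‖ ^ 2 ≤ (α * r * (1 + x)) ^ 2 := by
    have h2 : (α * r * (1 + x)) ^ 2 = x * (1 + x) ^ 3 * r ^ 2 := by
      rw [mul_pow, mul_pow, hα2]; ring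
    rw [h2]
    exact le_trans hA (stmt9_mono x r hx0 hr)
  have hsqrt := Real.sqrt_le_sqrt hfin
  rw [Real.sqrt_sq (norm_nonneg _), Real.sqrt_sq (by positivity)] at hsqrt
  rw [hdq]
  exact hsqrt
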